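/- For all β₁, β₂ ∈ ℕ and every finite linearly ordered set P, every infinite nested sequence over ℕ^{β₁} × P × ℕ^{β₂} is good; equivalently, every bad nested sequence over ℕ^{β₁} × P × ℕ^{β₂} is finite. -/

import Mathlib

/-!
Let `k₀ < k₁ < ⋯` be the indices whose height is minimal among all later heights; there are
infinitely many, since heights are natural numbers. Every pair `kₐ < k_b` of them satisfies the
height condition, and `≤_lex` is a well-order on `Y`, hence a well-quasi-order, so some `a < b`
has `y_{kₐ} ≤_lex y_{k_b}`.
-/

namespace PNS

/-- Strict lexicographic order on `Fin n → ℕ`. -/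
def VecLt {n : ℕ} (u v : Fin n → ℕ) : Prop :=
  ∃ i : Fin n, (∀ j : Fin n, j < i → u j = v j) ∧ u i < v i

/-- The ranking domain `ℕ^{β₁} × P × ℕ^{β₂}`. -/
abbrev Y (β₁ β₂ : ℕ) (P : Type) : Type := (Fin β₁ → ℕ) × P × (Fin β₂ → ℕ)

variable {β₁ β₂ : ℕ} {P : Type}

/-- Strict lexicographic order on `Y`. -/
def YLt [LT P] (y y' : Y β₁ β₂ P) : Prop :=
  VecLt y.1 y'.1 ∨
    y.1 = y'.1 ∧ (y.2.1 < y'.2.1 ∨ y.2.1 = y'.2.1 ∧ VecLt y.2.2 y'.2.2)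

/-- Lexicographic order on `Y`. -/
def YLe [LT P] (y y' : Y β₁ β₂ P) : Prop := y = y' ∨ YLt y y'

/-- Consecutive heights of a nested sequence change by at most one. -/
def HStep (h h' : ℕ) : Prop := h' = h + 1 ∨ h' = h ∨ h = h' + 1

/-- `Y` inside a lexicographic product that Mathlib already knows to be a well-ordered chain. -/
def toLexY (y : Y β₁ β₂ P) : Lex (Lex (Fin β₁ → ℕ) × Lex (P × Lex (Fin β₂ → ℕ))) :=
  toLex (toLex y.1, toLex (y.2.1, toLex y.2.2))

theorem toLexY_injective : Function.Injective (toLexY (β₁ := β₁) (β₂ := β₂) (P := P)) := by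
  rintro ⟨a, p, b⟩ ⟨a', p', b'⟩ h
  simpa [toLexY] using h

theorem vecLt_iff_toLex_lt {n : ℕ} (u v : Fin n → ℕ) : VecLt u v ↔ toLex u < toLex v := Iff.rfl

theorem yLt_iff_toLexY_lt [LT P] (y y' : Y β₁ β₂ P) : YLt y y' ↔ toLexY y < toLexY y' := by
  simp only [YLt, vecLt_iff_toLex_lt, toLexY, Prod.Lex.lt_iff, ofLex_toLex,
    EmbeddingLike.apply_eq_iff_eq]

theorem yLe_iff_toLexY_le [PartialOrder P] (y y' : Y β₁ β₂ P) :
    YLe y y' ↔ toLexY y ≤ toLexY y' := by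
  rw [YLe, le_iff_eq_or_lt, toLexY_injective.eq_iff, yLt_iff_toLexY_lt]

end PNS

def IsSuffixMin {α : Type*} [LE α] (h : ℕ → α) (k : ℕ) : Prop :=
  ∀ i, k ≤ i → h k ≤ h i

theorem infinite_setOf_isSuffixMin {α : Type*} [LinearOrder α] [WellFoundedLT α] (h : ℕ → α) :
    {k | IsSuffixMin h k}.Infinite := by
  refine Set.infinite_of_forall_exists_gt fun a => ?_
  have hne : (Set.Ioi a).Nonempty := Set.nonempty_Ioi
  refine ⟨Function.argminOn h (Set.Ioi a) hne, fun i hi => ?_, Function.argminOn_mem h _ hne⟩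
  exact Function.argminOn_le h _ (lt_of_lt_of_le (Function.argminOn_mem h _ hne) hi)

theorem infinite_nested_sequences_good_general
    (β₁ β₂ : ℕ) (P : Type) [Fintype P] [LinearOrder P]
    (f : ℕ → PNS.Y β₁ β₂ P × ℕ) :
    ∃ k m : ℕ, k < m ∧ PNS.YLe (f k).1 (f m).1 ∧
      ∀ i : ℕ, k < i → i ≤ m → (f k).2 ≤ (f i).2 := by
  have hmin := infinite_setOf_isSuffixMin fun n => (f n).2
  set k := Nat.nth (IsSuffixMin fun n => (f n).2)
  obtain ⟨a, b, hab, hle⟩ := wellQuasiOrdered_le fun n => PNS.toLexY (f (k n)).1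
  exact ⟨k a, k b, Nat.nth_strictMono hmin hab, (PNS.yLe_iff_toLexY_le _ _).2 hle,
    fun i hi _ => Nat.nth_mem_of_infinite hmin a i hi.le⟩

/-- **Every infinite nested sequence is good**: if `f : ℕ → Y × ℕ` satisfies the height
condition of nested sequences, then there are indices `k < m` with `y_k ≤_lex y_m` and
`h_i ≥ h_k` for all `k < i ≤ m`. -/
theorem infinite_nested_sequences_good
    (β₁ β₂ : ℕ) (P : Type) [Fintype P] [LinearOrder P]
    (f : ℕ → PNS.Y β₁ β₂ P × ℕ)
    (hstep : ∀ k : ℕ, PNS.HStep (f k).2 (f (k + 1)).2) :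
    ∃ k m : ℕ, k < m ∧ PNS.YLe (f k).1 (f m).1 ∧
      ∀ i : ℕ, k < i → i ≤ m → (f k).2 ≤ (f i).2 :=
  infinite_nested_sequences_good_general β₁ β₂ P f
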